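/- Let σ : ℝ^n → ℝ^n denote the softmax function, σ(x)_i = exp(x_i) / Σ_{j=1}^n exp(x_j). Then σ is 1-Lipschitz with respect to the Euclidean (ℓ²) norm: for all x, y ∈ ℝ^n, ‖σ(x) − σ(y)‖₂ ≤ ‖x − y‖₂. -/

import Mathlib

open Real Finset

namespace SMAux

variable {n : ℕ}

noncomputable def p (u : Fin n → ℝ) (i : Fin n) : ℝ := Real.exp (u i) / ∑ j, Real.exp (u j)

noncomputable def Df (u : Fin n → ℝ) : (Fin n → ℝ) →L[ℝ] (Fin n → ℝ) :=
  ContinuousLinearMap.pi fun i =>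
    p u i • ((ContinuousLinearMap.proj i : (Fin n → ℝ) →L[ℝ] ℝ)
      - ∑ j, p u j • (ContinuousLinearMap.proj j : (Fin n → ℝ) →L[ℝ] ℝ))

lemma Df_apply (u v : Fin n → ℝ) (i : Fin n) :
    Df u v i = p u i * (v i - ∑ j, p u j * v j) := by
  simp [Df, ContinuousLinearMap.sum_apply, smul_eq_mul]

lemma sum_pos (u : Fin n → ℝ) (hn : 0 < n) : 0 < ∑ j, Real.exp (u j) :=
  Finset.sum_pos (fun j _ => Real.exp_pos _) (by simpa using Finset.univ_nonempty_iff.2 ⟨⟨0, hn⟩⟩)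

lemma hasFDerivAt (u : Fin n → ℝ) (hn : 0 < n) :
    HasFDerivAt (fun u : Fin n → ℝ => fun i => Real.exp (u i) / ∑ j, Real.exp (u j)) (Df u) u := by
  have hS := (sum_pos u hn).ne'
  apply hasFDerivAt_pi.2
  intro i
  have hnum : HasFDerivAt (fun u : Fin n → ℝ => Real.exp (u i))
      (Real.exp (u i) • (ContinuousLinearMap.proj i : (Fin n → ℝ) →L[ℝ] ℝ)) u :=
    (Real.hasDerivAt_exp (u i)).comp_hasFDerivAt (f := fun u : Fin n → ℝ => u i) u (hasFDerivAt_apply i u)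
  have hden : HasFDerivAt (fun u : Fin n → ℝ => ∑ j, Real.exp (u j))
      (∑ j, Real.exp (u j) • (ContinuousLinearMap.proj j : (Fin n → ℝ) →L[ℝ] ℝ)) u := by
    exact HasFDerivAt.fun_sum fun j _ =>
      (Real.hasDerivAt_exp (u j)).comp_hasFDerivAt (f := fun u : Fin n → ℝ => u j) u (hasFDerivAt_apply j u)
  have hinv : HasFDerivAt (fun u : Fin n → ℝ => (∑ j, Real.exp (u j))⁻¹)
      ((-((∑ j, Real.exp (u j)) ^ 2)⁻¹) • ∑ j, Real.exp (u j) • (ContinuousLinearMap.proj j : (Fin n → ℝ) →L[ℝ] ℝ)) u :=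
    (hasDerivAt_inv hS).comp_hasFDerivAt u hden
  have h := hnum.mul hinv
  have heq : (fun x : Fin n → ℝ => Real.exp (x i) / ∑ j, Real.exp (x j))
      = fun x : Fin n → ℝ => Real.exp (x i) * (∑ j, Real.exp (x j))⁻¹ := by
    funext x; rw [div_eq_mul_inv]
  rw [heq]
  refine h.congr_fderiv ?_
  ext v
  simp only [ContinuousLinearMap.add_apply, ContinuousLinearMap.coe_smul', Pi.smul_apply,
    ContinuousLinearMap.sum_apply, ContinuousLinearMap.proj_apply, smul_eq_mul,
    Df, ContinuousLinearMap.pi_apply, ContinuousLinearMap.coe_sub', Pi.sub_apply, p]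
  rw [show ∑ x, (Real.exp (u x) / ∑ j, Real.exp (u j)) * v x
      = (∑ x, Real.exp (u x) * v x) / ∑ j, Real.exp (u j) by
    rw [Finset.sum_div]; exact Finset.sum_congr rfl fun x _ => by ring]
  field_simp
  ring

lemma p_nonneg (u : Fin n → ℝ) (i : Fin n) : 0 ≤ p u i :=
  div_nonneg (Real.exp_pos _).le (Finset.sum_nonneg fun j _ => (Real.exp_pos _).le)

lemma p_sum (u : Fin n → ℝ) (hn : 0 < n) : ∑ i, p u i = 1 := by
  have hS := (sum_pos u hn).ne'
  simp only [p, ← Finset.sum_div]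
  exact div_self hS

lemma key (q v : Fin n → ℝ) (hq : ∀ i, 0 ≤ q i) (hs : ∑ i, q i = 1) :
    ∑ i, (q i * (v i - ∑ j, q j * v j)) ^ 2 ≤ ∑ i, v i ^ 2 := by
  set s := ∑ j, q j * v j with hsdef
  have hq1 : ∀ i, q i ≤ 1 := by
    intro i
    calc q i ≤ ∑ j, q j := Finset.single_le_sum (fun j _ => hq j) (Finset.mem_univ i)
    _ = 1 := hs
  have h1 : ∑ i, (q i * (v i - s)) ^ 2 ≤ ∑ i, q i * (v i - s) ^ 2 := by
    apply Finset.sum_le_sum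
    intro i _
    nlinarith [mul_nonneg (mul_nonneg (hq i) (sub_nonneg.2 (hq1 i))) (sq_nonneg (v i - s))]
  have h2 : ∑ i, q i * (v i - s) ^ 2 = (∑ i, q i * v i ^ 2) - s ^ 2 := by
    have : ∀ i, q i * (v i - s) ^ 2 = q i * v i ^ 2 - 2 * s * (q i * v i) + s ^ 2 * q i := by
      intro i; ring
    simp_rw [this, Finset.sum_add_distrib, Finset.sum_sub_distrib, ← Finset.mul_sum, hs, ← hsdef]
    ring
  have h3 : (∑ i, q i * v i ^ 2) ≤ ∑ i, v i ^ 2 := by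
    apply Finset.sum_le_sum
    intro i _
    nlinarith [hq i, hq1 i, sq_nonneg (v i)]
  nlinarith [sq_nonneg s]

end SMAux

/-- The softmax function on `ℝⁿ` (with the Euclidean norm),
`σ(x)_i = exp (x_i) / ∑_j exp (x_j)`. -/
noncomputable def softmax {n : ℕ} (x : EuclideanSpace ℝ (Fin n)) :
    EuclideanSpace ℝ (Fin n) :=
  (WithLp.equiv 2 (Fin n → ℝ)).symm fun i => Real.exp (x i) / ∑ j, Real.exp (x j)

/-- Softmax is 1-Lipschitz with respect to the Euclidean norm. -/
theorem softmax_lipschitz {n : ℕ} (x y : EuclideanSpace ℝ (Fin n)) :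
    ‖softmax x - softmax y‖ ≤ ‖x - y‖ := by
  rcases Nat.eq_zero_or_pos n with hn | hn
  · subst hn
    haveI : Subsingleton (EuclideanSpace ℝ (Fin 0)) := ⟨fun a b => by ext i; exact i.elim0⟩
    rw [Subsingleton.elim (softmax x - softmax y) 0, norm_zero]
    exact norm_nonneg _
  · set L := EuclideanSpace.equiv (Fin n) ℝ with hL
    set f' : EuclideanSpace ℝ (Fin n) → (EuclideanSpace ℝ (Fin n) →L[ℝ] EuclideanSpace ℝ (Fin n)) :=
      fun z => ((L.symm : (Fin n → ℝ) →L[ℝ] EuclideanSpace ℝ (Fin n)).comp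
        (SMAux.Df (L z))).comp (L : EuclideanSpace ℝ (Fin n) →L[ℝ] (Fin n → ℝ)) with hf'
    have hderiv : ∀ z : EuclideanSpace ℝ (Fin n), HasFDerivAt softmax (f' z) z := by
      intro z
      have h1 := SMAux.hasFDerivAt (L z) hn
      have h2 := h1.comp z (L.toContinuousLinearMap.hasFDerivAt (x := z))
      have h3 := (L.symm.toContinuousLinearMap.hasFDerivAt).comp z h2
      exact h3
    have hbound : ∀ z : EuclideanSpace ℝ (Fin n), ‖f' z‖ ≤ 1 := by
      intro z
      refine ContinuousLinearMap.opNorm_le_bound _ zero_le_one fun v => ?_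
      rw [one_mul, EuclideanSpace.norm_eq, EuclideanSpace.norm_eq]
      apply Real.sqrt_le_sqrt
      have happ : ∀ i, f' z v i =
          SMAux.p (L z) i * (v i - ∑ j, SMAux.p (L z) j * v j) := by
        intro i
        simp [hf', SMAux.Df_apply, hL]
      simp only [happ, Real.norm_eq_abs, sq_abs]
      exact SMAux.key (SMAux.p (L z)) (fun i => v i) (SMAux.p_nonneg (L z))
        (SMAux.p_sum (L z) hn)
    have := Convex.norm_image_sub_le_of_norm_hasFDerivWithin_le
      (f' := f') (fun z _ => (hderiv z).hasFDerivWithinAt) (fun z _ => hbound z)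
      convex_univ (Set.mem_univ y) (Set.mem_univ x)
    simpa using this
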